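/- arXiv:2411.15134 — 8 statements merged into one kernel-verified Lean document; each statement's English description precedes it below -/
import Mathlib

section
/- (Birch-type intersection) Let A ∈ ℤ^{d×n}. For any x, x* ∈ ℝ_{>0}^n, the coset x ∘ T_A^{>0} intersects the affine subspace x* + ker_ℝ(A) ∩ ℝ_{>0}^n in exactly one point, where ker_ℝ(A) = {v ∈ ℝ^n : Av = 0} (viewing A as a real matrix). -/
/-- The positive torus `T_A^{>0} = { t^A : t ∈ ℝ_{>0}^d }`. -/
def posTorus {d n : ℕ} (A : Matrix (Fin d) (Fin n) ℤ) : Set (Fin n → ℝ) :=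
  {x | ∃ t : Fin d → ℝ, (∀ i, 0 < t i) ∧ x = fun j => ∏ i, t i ^ A i j}

open Real Finset Matrix

/-- zpow product as exponential. -/
lemma birch_prod_zpow {d n : ℕ} (A : Matrix (Fin d) (Fin n) ℤ) (t : Fin d → ℝ)
    (ht : ∀ i, 0 < t i) (j : Fin n) :
    ∏ i, t i ^ A i j = Real.exp (∑ i, (A i j : ℝ) * Real.log (t i)) := by
  rw [Real.exp_sum]
  refine Finset.prod_congr rfl fun i _ => ?_
  rw [← Real.log_zpow, Real.exp_log (zpow_pos (ht i) _)]

/-- lower bound for a * exp s - c * s. -/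
lemma birch_term_lb (a c : ℝ) (ha : 0 < a) (hc : 0 < c) (s : ℝ) :
    c - c * Real.log (c / a) ≤ a * Real.exp s - c * s := by
  have h := Real.add_one_le_exp (s - Real.log (c / a))
  have h1 : Real.exp (s - Real.log (c / a)) = a * Real.exp s / c := by
    rw [Real.exp_sub, Real.exp_log (div_pos hc ha)]
    field_simp
  rw [h1] at h
  have h2 := (le_div_iff₀ hc).mp h
  nlinarith

/-- growth of a * exp s - c * s as |s| → ∞. -/
lemma birch_term_growth (a c : ℝ) (ha : 0 < a) (hc : 0 < c) (C : ℝ) :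
    ∃ R, 0 < R ∧ ∀ s : ℝ, R ≤ |s| → C ≤ a * Real.exp s - c * s := by
  refine ⟨max 1 (max C (max (C / c) (4 * (c + 1) / a))), lt_of_lt_of_le one_pos (le_max_left _ _), ?_⟩
  intro s hs
  rcases le_total s 0 with h0 | h0
  · rw [abs_of_nonpos h0] at hs
    have h1 : C / c ≤ -s :=
      le_trans (le_max_of_le_right (le_max_of_le_right (le_max_left _ _))) hs
    have h2 : C ≤ c * (-s) := (div_le_iff₀ hc).mp h1 |>.trans_eq (mul_comm _ _)
    nlinarith [Real.exp_pos s]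
  · rw [abs_of_nonneg h0] at hs
    have h1 : C ≤ s := le_trans (le_max_of_le_right (le_max_left _ _)) hs
    have h2 : 4 * (c + 1) / a ≤ s :=
      le_trans (le_max_of_le_right (le_max_of_le_right (le_max_right _ _))) hs
    have h3 : 4 * (c + 1) ≤ a * s := by
      rw [div_le_iff₀ ha] at h2; linarith [h2]
    have h4 : 1 + s / 2 ≤ Real.exp (s / 2) := by linarith [Real.add_one_le_exp (s / 2)]
    have h5 : (1 + s / 2) ^ 2 ≤ Real.exp s := by
      have := mul_le_mul h4 h4 (by linarith) (Real.exp_pos _).le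
      calc (1 + s/2)^2 = (1 + s/2) * (1 + s/2) := sq _
        _ ≤ Real.exp (s/2) * Real.exp (s/2) := this
        _ = Real.exp s := by rw [← Real.exp_add]; ring_nf
    nlinarith [mul_le_mul_of_nonneg_left h5 ha.le, mul_le_mul_of_nonneg_right h3 h0]
/-- Uniqueness part of Birch's theorem. -/
lemma birch_eq {d n : ℕ} (A : Matrix (Fin d) (Fin n) ℤ) (x xs : Fin n → ℝ)
    (hx : ∀ j, 0 < x j) {z₁ z₂ : Fin n → ℝ}
    (h₁ : z₁ ∈ (fun u => x * u) '' posTorus A ∧ (∀ j, 0 < z₁ j) ∧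
      (∀ i, ∑ j, (A i j : ℝ) * (z₁ j - xs j) = 0))
    (h₂ : z₂ ∈ (fun u => x * u) '' posTorus A ∧ (∀ j, 0 < z₂ j) ∧
      (∀ i, ∑ j, (A i j : ℝ) * (z₂ j - xs j) = 0)) : z₁ = z₂ := by
  obtain ⟨u₁, ⟨t₁, ht₁, rfl⟩, hz₁⟩ := h₁.1
  obtain ⟨u₂, ⟨t₂, ht₂, rfl⟩, hz₂⟩ := h₂.1
  set y₁ : Fin n → ℝ := fun j => ∑ i, (A i j : ℝ) * Real.log (t₁ i) with hy₁
  set y₂ : Fin n → ℝ := fun j => ∑ i, (A i j : ℝ) * Real.log (t₂ i) with hy₂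
  have hz₁' : ∀ j, z₁ j = x j * Real.exp (y₁ j) := by
    intro j; rw [← hz₁]; simp [birch_prod_zpow A t₁ ht₁ j]; exact Or.inl rfl
  have hz₂' : ∀ j, z₂ j = x j * Real.exp (y₂ j) := by
    intro j; rw [← hz₂]; simp [birch_prod_zpow A t₂ ht₂ j]; exact Or.inl rfl
  have hker : ∀ i, ∑ j, (A i j : ℝ) * (z₁ j - z₂ j) = 0 := by
    intro i
    have e : ∀ j ∈ Finset.univ, (A i j : ℝ) * (z₁ j - z₂ j) =
        (A i j : ℝ) * (z₁ j - xs j) - (A i j : ℝ) * (z₂ j - xs j) := by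
      intro j _; ring
    rw [Finset.sum_congr rfl e, Finset.sum_sub_distrib, h₁.2.2 i, h₂.2.2 i, sub_zero]
  have hS : ∑ j, (z₁ j - z₂ j) * (y₁ j - y₂ j) = 0 := by
    have e : ∀ j ∈ Finset.univ, (z₁ j - z₂ j) * (y₁ j - y₂ j) =
        ∑ i, (Real.log (t₁ i) - Real.log (t₂ i)) * ((A i j : ℝ) * (z₁ j - z₂ j)) := by
      intro j _
      rw [hy₁, hy₂]
      simp only
      rw [← Finset.sum_sub_distrib, Finset.mul_sum]
      refine Finset.sum_congr rfl fun i _ => by ring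
    rw [Finset.sum_congr rfl e, Finset.sum_comm]
    refine Finset.sum_eq_zero fun i _ => ?_
    rw [← Finset.mul_sum, hker i, mul_zero]
  have hnn : ∀ j ∈ Finset.univ, (0:ℝ) ≤ (z₁ j - z₂ j) * (y₁ j - y₂ j) := by
    intro j _
    rw [hz₁' j, hz₂' j]
    rcases le_total (y₁ j) (y₂ j) with h | h
    · have he := mul_le_mul_of_nonneg_left (Real.exp_le_exp.2 h) (hx j).le
      have h2 := mul_nonneg (a := -(x j * Real.exp (y₁ j) - x j * Real.exp (y₂ j)))
        (b := -(y₁ j - y₂ j)) (by linarith) (by linarith)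
      rwa [neg_mul_neg] at h2
    · have he := mul_le_mul_of_nonneg_left (Real.exp_le_exp.2 h) (hx j).le
      exact mul_nonneg (by linarith) (by linarith)
  have hall := (Finset.sum_eq_zero_iff_of_nonneg hnn).mp hS
  funext j
  have hj := hall j (Finset.mem_univ j)
  have hy : y₁ j = y₂ j := by
    rcases lt_trichotomy (y₁ j) (y₂ j) with h | h | h
    · exfalso
      rw [hz₁' j, hz₂' j] at hj
      have he := mul_lt_mul_of_pos_left (Real.exp_lt_exp.2 h) (hx j)
      have h2 := mul_pos (a := -(x j * Real.exp (y₁ j) - x j * Real.exp (y₂ j)))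
        (b := -(y₁ j - y₂ j)) (by linarith) (by linarith)
      rw [neg_mul_neg] at h2
      exact absurd hj (ne_of_gt h2)
    · exact h
    · exfalso
      rw [hz₁' j, hz₂' j] at hj
      have he := mul_lt_mul_of_pos_left (Real.exp_lt_exp.2 h) (hx j)
      exact absurd hj (ne_of_gt (mul_pos (by linarith) (by linarith)))
  rw [hz₁' j, hz₂' j, hy]

/-- Birch's theorem: for `x, x* ∈ ℝ_{>0}^n`, the coset `x ∘ T_A^{>0}` meets the affine
subspace `x* + ker_ℝ(A)` intersected with the positive orthant in exactly one point. -/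
theorem stmt2 {d n : ℕ} (A : Matrix (Fin d) (Fin n) ℤ) (x xs : Fin n → ℝ)
    (hx : ∀ j, 0 < x j) (hxs : ∀ j, 0 < xs j) :
    ∃! z : Fin n → ℝ, z ∈ (fun u => x * u) '' posTorus A ∧ (∀ j, 0 < z j) ∧
      (∀ i, ∑ j, (A i j : ℝ) * (z j - xs j) = 0) := by
  classical
  set F : (Fin n → ℝ) → ℝ := fun y => ∑ j, (x j * Real.exp (y j) - xs j * y j) with hF
  set A' : Matrix (Fin d) (Fin n) ℝ := Matrix.of fun i j => (A i j : ℝ) with hA'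
  set U : Submodule ℝ (Fin n → ℝ) := LinearMap.range (Matrix.mulVecLin A'ᵀ) with hU
  have hFcont : Continuous F := by
    refine continuous_finset_sum _ fun j _ => Continuous.sub ?_ ?_
    · exact continuous_const.mul (Real.continuous_exp.comp (continuous_apply j))
    · exact continuous_const.mul (continuous_apply j)
  -- coercivity
  have hcoer : ∀ C : ℝ, ∃ R, 0 < R ∧ ∀ y : Fin n → ℝ, R ≤ ‖y‖ → C ≤ F y := by
    intro C
    set m : Fin n → ℝ := fun j => xs j - xs j * Real.log (xs j / x j) with hm
    set M : ℝ := ∑ j, |m j| with hM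
    have hlb : ∀ j (s : ℝ), m j ≤ x j * Real.exp s - xs j * s :=
      fun j s => birch_term_lb (x j) (xs j) (hx j) (hxs j) s
    choose R hRpos hR using fun j => birch_term_growth (x j) (xs j) (hx j) (hxs j) (C + M)
    have hRsum : 0 ≤ ∑ j, R j := Finset.sum_nonneg fun j _ => (hRpos j).le
    refine ⟨1 + ∑ j, R j, by linarith, ?_⟩
    intro y hy
    have hex : ∃ j0, R j0 ≤ |y j0| := by
      by_contra hcon
      push_neg at hcon
      have h1 : ‖y‖ ≤ ∑ j, R j := by
        rw [pi_norm_le_iff_of_nonneg hRsum]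
        intro j
        rw [Real.norm_eq_abs]
        exact le_trans (hcon j).le (Finset.single_le_sum (fun j _ => (hRpos j).le) (Finset.mem_univ j))
      linarith
    obtain ⟨j0, hj0⟩ := hex
    have hterm : C + M ≤ x j0 * Real.exp (y j0) - xs j0 * y j0 := hR j0 _ hj0
    have hrest : -M ≤ ∑ j ∈ Finset.univ.erase j0, (x j * Real.exp (y j) - xs j * y j) := by
      have h1 : ∑ j ∈ Finset.univ.erase j0, m j ≤
          ∑ j ∈ Finset.univ.erase j0, (x j * Real.exp (y j) - xs j * y j) :=
        Finset.sum_le_sum fun j _ => hlb j (y j)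
      have h2 : ∑ j ∈ Finset.univ.erase j0, |m j| ≤ M :=
        Finset.sum_le_sum_of_subset_of_nonneg (Finset.subset_univ _) fun j _ _ => abs_nonneg _
      have h3 : ∑ j ∈ Finset.univ.erase j0, (-|m j|) ≤ ∑ j ∈ Finset.univ.erase j0, m j :=
        Finset.sum_le_sum fun j _ => neg_abs_le _
      rw [Finset.sum_neg_distrib] at h3
      linarith
    have hsplit : F y = (x j0 * Real.exp (y j0) - xs j0 * y j0) +
        ∑ j ∈ Finset.univ.erase j0, (x j * Real.exp (y j) - xs j * y j) :=
      (Finset.add_sum_erase _ _ (Finset.mem_univ j0)).symm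
    rw [hsplit]
    linarith
  obtain ⟨R, hRpos, hR⟩ := hcoer (F 0 + 1)
  have hUc : IsClosed (U : Set (Fin n → ℝ)) := Submodule.closed_of_finiteDimensional U
  have hK : IsCompact ((U : Set (Fin n → ℝ)) ∩ Metric.closedBall 0 R) :=
    (isCompact_closedBall (0 : Fin n → ℝ) R).inter_left hUc
  have h0K : (0 : Fin n → ℝ) ∈ (U : Set (Fin n → ℝ)) ∩ Metric.closedBall 0 R :=
    ⟨U.zero_mem, Metric.mem_closedBall_self hRpos.le⟩
  obtain ⟨y₀, hy₀K, hy₀min⟩ := hK.exists_isMinOn ⟨0, h0K⟩ hFcont.continuousOn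
  have hy₀min' := isMinOn_iff.mp hy₀min
  have hglob : ∀ y ∈ U, F y₀ ≤ F y := by
    intro y hyU
    by_cases hyR : ‖y‖ ≤ R
    · exact hy₀min' y ⟨hyU, by simpa [Metric.mem_closedBall, dist_zero_right] using hyR⟩
    · have h1 := hR y (le_of_not_ge hyR)
      have h2 : F y₀ ≤ F 0 := hy₀min' 0 h0K
      linarith
  have hy₀U : y₀ ∈ U := hy₀K.1
  -- criticality
  have hcrit : ∀ u ∈ U, ∑ j, (x j * Real.exp (y₀ j) - xs j) * u j = 0 := by
    intro u huU
    set φ : ℝ → ℝ :=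
      fun s => ∑ j, (x j * Real.exp (y₀ j + s * u j) - xs j * (y₀ j + s * u j)) with hφ
    have hφF : ∀ s, φ s = F (y₀ + s • u) := by
      intro s
      simp [hφ, hF, Pi.add_apply, Pi.smul_apply, smul_eq_mul]
    have hloc : IsLocalMin φ 0 := by
      refine Filter.Eventually.of_forall fun s => ?_
      rw [hφF s, hφF 0]
      simp only [zero_smul, add_zero]
      exact hglob _ (U.add_mem hy₀U (U.smul_mem s huU))
    have hder : HasDerivAt φ (∑ j, (x j * Real.exp (y₀ j) - xs j) * u j) 0 := by
      have hterm : ∀ j ∈ Finset.univ, HasDerivAt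
          (fun s : ℝ => x j * Real.exp (y₀ j + s * u j) - xs j * (y₀ j + s * u j))
          ((x j * Real.exp (y₀ j) - xs j) * u j) 0 := by
        intro j _
        have h1 : HasDerivAt (fun s : ℝ => y₀ j + s * u j) (u j) 0 := by
          simpa using ((hasDerivAt_id (0 : ℝ)).mul_const (u j)).const_add (y₀ j)
        have h2 := (h1.exp.const_mul (x j)).sub (h1.const_mul (xs j))
        refine h2.congr_deriv ?_
        rw [zero_mul, add_zero]
        ring
      exact HasDerivAt.fun_sum hterm
    have h0 := hloc.deriv_eq_zero
    rwa [hder.deriv] at h0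
  have hrow : ∀ i, (fun j => (A i j : ℝ)) ∈ U := by
    intro i
    refine ⟨Pi.single i 1, ?_⟩
    funext j
    simp [Matrix.mulVecLin_apply, Matrix.mulVec, dotProduct, Matrix.transpose_apply, hA',
      Pi.single_apply, mul_ite]
  obtain ⟨θ, hθ⟩ := hy₀U
  have hy₀j : ∀ j, y₀ j = ∑ i, (A i j : ℝ) * θ i := by
    intro j
    rw [← hθ]
    simp [Matrix.mulVecLin_apply, Matrix.vecMul, Matrix.mulVec, dotProduct,
      Matrix.transpose_apply, hA', mul_comm]
  have hzprop : (fun j => x j * Real.exp (y₀ j)) ∈ (fun u => x * u) '' posTorus A ∧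
      (∀ j, 0 < x j * Real.exp (y₀ j)) ∧
      (∀ i, ∑ j, (A i j : ℝ) * (x j * Real.exp (y₀ j) - xs j) = 0) := by
    refine ⟨⟨fun j => Real.exp (y₀ j), ⟨fun i => Real.exp (θ i), fun i => Real.exp_pos _, ?_⟩, ?_⟩,
      fun j => mul_pos (hx j) (Real.exp_pos _), ?_⟩
    · funext j
      rw [birch_prod_zpow A _ (fun i => Real.exp_pos _) j]
      simp [Real.log_exp, hy₀j j]
    · funext j
      simp [Pi.mul_apply]
    · intro i
      have h := hcrit _ (hrow i)
      rw [show (∑ j, (A i j : ℝ) * (x j * Real.exp (y₀ j) - xs j)) =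
          ∑ j, (x j * Real.exp (y₀ j) - xs j) * (A i j : ℝ) from
        Finset.sum_congr rfl fun j _ => by ring]
      exact h
  exact ⟨fun j => x j * Real.exp (y₀ j), hzprop, fun z' hz' => birch_eq A x xs hx hz' hzprop⟩
end

section
/- Let V ⊆ ℝ^m be a linear subspace and let {w_1, …, w_ℓ} be a spanning set of V consisting of circuit vectors (nonzero vectors of V with support minimal among supports of nonzero vectors of V). Then the partition of [m] generated by the equivalence relation 'j ~ j₀ if j, j₀ ∈ supp(v) for some circuit vector v of V' coincides with the partition generated by the same relation restricted to the vectors w_1, …, w_ℓ. -/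
/-- A circuit vector of a subspace `V ⊆ ℝ^m`: a nonzero element of `V` whose support is
minimal among supports of nonzero elements of `V`. -/
def IsCircuit {m : ℕ} (V : Submodule ℝ (Fin m → ℝ)) (v : Fin m → ℝ) : Prop :=
  v ∈ V ∧ v ≠ 0 ∧ ∀ w ∈ V, w ≠ 0 → ¬ ({i | w i ≠ 0} ⊂ {i | v i ≠ 0})

/-- The relation on `[m]` induced by a set of vectors: `j ~ j₀` if both lie in the support
of some vector of the set. -/
def suppRel {m : ℕ} (𝒱 : Set (Fin m → ℝ)) (j j₀ : Fin m) : Prop :=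
  ∃ v ∈ 𝒱, v j ≠ 0 ∧ v j₀ ≠ 0

/-- The partition of `[m]` induced by all circuit vectors of `V` coincides with the one
induced by a spanning set of `V` consisting of circuit vectors. -/
theorem stmt3 {m ℓ : ℕ} (V : Submodule ℝ (Fin m → ℝ)) (w : Fin ℓ → (Fin m → ℝ))
    (hw : ∀ k, IsCircuit V (w k)) (hspan : Submodule.span ℝ (Set.range w) = V) :
    ∀ j j₀ : Fin m,
      Relation.EqvGen (suppRel {v | IsCircuit V v}) j j₀ ↔
        Relation.EqvGen (suppRel (Set.range w)) j j₀ := by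
  classical
  set R := Relation.EqvGen (suppRel (Set.range w)) with hRdef
  have hRsupp : ∀ (k : Fin ℓ) (i i' : Fin m), w k i ≠ 0 → w k i' ≠ 0 → R i i' :=
    fun k i i' h1 h2 => Relation.EqvGen.rel _ _ ⟨w k, ⟨k, rfl⟩, h1, h2⟩
  have key : ∀ (v : Fin m → ℝ), IsCircuit V v → ∀ a b, v a ≠ 0 → v b ≠ 0 → R a b := by
    intro v hv a b ha hb
    by_contra hR
    have hv' : v ∈ Submodule.span ℝ (Set.range w) := by rw [hspan]; exact hv.1
    obtain ⟨c, hc⟩ := (Submodule.mem_span_range_iff_exists_fun ℝ).mp hv'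
    set S : Finset (Fin ℓ) := Finset.univ.filter (fun k => ∀ i, w k i ≠ 0 → R a i) with hSdef
    set u : Fin m → ℝ := fun i => if R a i then v i else 0 with hudef
    have hu : u = ∑ k ∈ S, c k • w k := by
      funext i
      simp only [hudef, Finset.sum_apply, Pi.smul_apply, smul_eq_mul]
      by_cases hi : R a i
      · simp only [hi, if_true]
        have hvi : v i = ∑ k, c k * w k i := by
          rw [← hc]; simp
        rw [hvi]
        symm
        apply Finset.sum_subset (Finset.subset_univ S)
        intro k _ hk
        simp only [hSdef, Finset.mem_filter, Finset.mem_univ, true_and, not_forall] at hk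
        obtain ⟨i', hi', hRi'⟩ := hk
        by_cases hwi : w k i = 0
        · rw [hwi]; ring
        · exact absurd (Relation.EqvGen.trans _ _ _ hi (hRsupp k i i' hwi hi')) hRi'
      · simp only [hi, if_false]
        symm
        apply Finset.sum_eq_zero
        intro k hk
        simp only [hSdef, Finset.mem_filter, Finset.mem_univ, true_and] at hk
        by_cases hwi : w k i = 0
        · rw [hwi]; ring
        · exact absurd (hk i hwi) hi
    have huV : u ∈ V := by
      rw [hu]
      exact Submodule.sum_mem _ (fun k _ => Submodule.smul_mem _ _ ((hw k).1))
    have hua : u a = v a := by rw [hudef]; exact if_pos (Relation.EqvGen.refl a)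
    have hub : u b = 0 := by rw [hudef]; exact if_neg hR
    have hune : u ≠ 0 := fun h => ha (by rw [← hua, h]; rfl)
    have hss : {i | u i ≠ 0} ⊂ {i | v i ≠ 0} := by
      constructor
      · intro i hi
        simp only [Set.mem_setOf_eq, hudef] at hi ⊢
        by_cases h : R a i
        · simpa [h] using hi
        · simp [h] at hi
      · intro hsub
        have := hsub hb
        simp only [Set.mem_setOf_eq, hub] at this
        exact this rfl
    exact hv.2.2 u huV hune hss
  intro j j₀
  constructor
  · intro h
    induction h with
    | rel a b hab =>
      obtain ⟨v, hv, ha, hb⟩ := hab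
      exact key v hv a b ha hb
    | refl a => exact Relation.EqvGen.refl a
    | symm a b _ ih => exact Relation.EqvGen.symm _ _ ih
    | trans a b c _ _ ih1 ih2 => exact Relation.EqvGen.trans _ _ _ ih1 ih2
  · intro h
    induction h with
    | rel a b hab =>
      obtain ⟨v, ⟨k, hk⟩, ha, hb⟩ := hab
      exact Relation.EqvGen.rel _ _ ⟨v, by rw [← hk]; exact hw k, ha, hb⟩
    | refl a => exact Relation.EqvGen.refl a
    | symm a b _ ih => exact Relation.EqvGen.symm _ _ ih
    | trans a b c _ _ ih1 ih2 => exact Relation.EqvGen.trans _ _ _ ih1 ih2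
end

section
/- Let V ⊆ ℝ^m be a linear subspace, let v be a circuit vector of V, and suppose v = Σ_{j=1}^ℓ λ_j w_j where each w_j is a circuit vector of V. Let ρ be a block of the partition induced by {w_1,…,w_ℓ} that intersects supp(v). Then supp(v) ⊆ ρ. -/
/-- If a circuit vector `v` of `V` is a linear combination of circuit vectors `w_k`, and `ρ`
is a block of the partition induced by the `w_k` that meets `supp(v)`, then `supp(v) ⊆ ρ`. -/
theorem stmt4 {m ℓ : ℕ} (V : Submodule ℝ (Fin m → ℝ)) (v : Fin m → ℝ)
    (hv : IsCircuit V v) (w : Fin ℓ → (Fin m → ℝ)) (hw : ∀ k, IsCircuit V (w k))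
    (lam : Fin ℓ → ℝ) (hsum : v = ∑ k, lam k • w k)
    (ρ : Set (Fin m)) (i₀ : Fin m)
    (hρ : ρ = {i | Relation.EqvGen (suppRel (Set.range w)) i₀ i})
    (hmeet : ∃ j ∈ ρ, v j ≠ 0) :
    {j | v j ≠ 0} ⊆ ρ := by
  classical
  -- Each w k either has support inside ρ or disjoint from ρ.
  set S : Finset (Fin ℓ) := Finset.univ.filter (fun k => ∀ i, w k i ≠ 0 → i ∈ ρ) with hS
  have hdisj : ∀ k ∉ S, ∀ i ∈ ρ, w k i = 0 := by
    intro k hk i hi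
    simp only [hS, Finset.mem_filter, Finset.mem_univ, true_and, not_forall] at hk
    obtain ⟨i', hi', hni'⟩ := hk
    by_contra hwki
    apply hni'
    rw [hρ] at hi ⊢
    exact Relation.EqvGen.trans _ _ _ hi
      (Relation.EqvGen.rel _ _ ⟨w k, Set.mem_range_self k, hwki, hi'⟩)
  set v₁ : Fin m → ℝ := ∑ k ∈ S, lam k • w k with hv₁
  set v₂ : Fin m → ℝ := ∑ k ∈ Sᶜ, lam k • w k with hv₂
  have hsplit : v = v₁ + v₂ := by
    rw [hsum, hv₁, hv₂, Finset.sum_add_sum_compl]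
  have hv₁ρ : ∀ i ∉ ρ, v₁ i = 0 := by
    intro i hi
    rw [hv₁]
    simp only [Finset.sum_apply, Pi.smul_apply, smul_eq_mul]
    refine Finset.sum_eq_zero fun k hk => ?_
    simp only [hS, Finset.mem_filter, Finset.mem_univ, true_and] at hk
    rcases eq_or_ne (w k i) 0 with h | h
    · rw [h, mul_zero]
    · exact absurd (hk i h) hi
  have hv₂ρ : ∀ i ∈ ρ, v₂ i = 0 := by
    intro i hi
    rw [hv₂]
    simp only [Finset.sum_apply, Pi.smul_apply, smul_eq_mul]
    refine Finset.sum_eq_zero fun k hk => ?_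
    rw [hdisj k (Finset.mem_compl.mp hk) i hi, mul_zero]
  have hv₂V : v₂ ∈ V := Submodule.sum_mem V fun k _ => Submodule.smul_mem V _ (hw k).1
  obtain ⟨j₁, hj₁ρ, hj₁v⟩ := hmeet
  have hv₂0 : v₂ = 0 := by
    by_contra hne
    apply hv.2.2 v₂ hv₂V hne
    constructor
    · intro i hi
      simp only [Set.mem_setOf_eq] at hi ⊢
      have hiρ : i ∉ ρ := fun h => hi (hv₂ρ i h)
      rw [hsplit]
      simpa [hv₁ρ i hiρ] using hi
    · intro hsub
      have := hsub (by simpa [Set.mem_setOf_eq] using hj₁v)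
      simp only [Set.mem_setOf_eq] at this
      exact this (hv₂ρ j₁ hj₁ρ)
  intro i hi
  simp only [Set.mem_setOf_eq] at hi
  by_contra hiρ
  rw [hsplit] at hi
  simp [hv₁ρ i hiρ, hv₂0] at hi
end

section
/- Let C ∈ ℂ^{s×m} have rank s, M ∈ ℤ^{n×m}, and a ∈ ℤ^n (a row vector). The vertical system F(x) = C(κ ∘ x^M) satisfies F(x ∘ t^a) = F(x) ∘ t^b for some b ∈ ℤ^s (quasihomogeneity with weights a) if and only if a·M_j = a·M_{j₀} for all j, j₀ ∈ supp(C_{i*}) and all i ∈ [s], where M_j denotes the j-th column of M and C_{i*} the i-th row of C. -/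
private lemma zpow_prod_key {n : ℕ} (x : Fin n → ℂ) (t : ℂ) (ht : t ≠ 0)
    (a c : Fin n → ℤ) :
    (∏ l, (x l * t ^ a l) ^ c l) = (∏ l, x l ^ c l) * t ^ (∑ l, a l * c l) := by
  have : ∀ l, (x l * t ^ a l) ^ c l = x l ^ c l * t ^ (a l * c l) := by
    intro l
    rw [mul_zpow, zpow_mul]
  simp only [this, Finset.prod_mul_distrib]
  congr 1
  induction (Finset.univ : Finset (Fin n)) using Finset.induction with
  | empty => simp
  | insert _ _ hnot ih =>
    rw [Finset.prod_insert hnot, Finset.sum_insert hnot, zpow_add₀ ht, ih]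

private lemma two_zpow_inj {w b : ℤ} (h : (2:ℂ)^w = 2^b) : w = b := by
  have h2 : ‖(2:ℂ)^w‖ = ‖(2:ℂ)^b‖ := by rw [h]
  rw [norm_zpow, norm_zpow] at h2
  have : ‖(2:ℂ)‖ = 2 := by simp
  rw [this] at h2
  exact zpow_right_injective₀ (by norm_num) (by norm_num) h2

/-- Quasihomogeneity of a vertical system `F = C(κ ∘ x^M)` with weights `a ∈ ℤ^n`
(existence of `b ∈ ℤ^s` with `F(x ∘ t^a) = F(x) ∘ t^b` identically) is equivalent to
`a·M_j = a·M_{j₀}` for all `j, j₀` in the support of the same row of `C`. -/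
theorem stmt5 {s m n : ℕ} (C : Matrix (Fin s) (Fin m) ℂ) (hC : C.rank = s)
    (M : Matrix (Fin n) (Fin m) ℤ) (a : Fin n → ℤ) :
    (∃ b : Fin s → ℤ, ∀ (κ : Fin m → ℂ) (x : Fin n → ℂ) (t : ℂ),
        (∀ l, x l ≠ 0) → t ≠ 0 →
        ∀ i, (∑ j, C i j * (κ j * ∏ l, (x l * t ^ a l) ^ M l j))
          = t ^ b i * ∑ j, C i j * (κ j * ∏ l, x l ^ M l j)) ↔
      (∀ i : Fin s, ∀ j j₀ : Fin m, C i j ≠ 0 → C i j₀ ≠ 0 →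
        (∑ l, a l * M l j) = ∑ l, a l * M l j₀) := by
  constructor
  · rintro ⟨b, hb⟩ i j j₀ hj hj₀
    -- show ∑ l, a l * M l j = b i for each j with C i j ≠ 0
    have key : ∀ j : Fin m, C i j ≠ 0 → (∑ l, a l * M l j) = b i := by
      intro j hj
      have h := hb (fun j' => if j' = j then (1:ℂ) else 0) (fun _ => (1:ℂ)) 2
        (fun _ => one_ne_zero) two_ne_zero i
      rw [Finset.sum_eq_single j (by intro c _ hc; simp [hc]) (by simp),
          Finset.sum_eq_single j (by intro c _ hc; simp [hc]) (by simp)] at h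
      rw [zpow_prod_key (fun _ => (1:ℂ)) 2 two_ne_zero a (fun l => M l j)] at h
      simp only [if_true, if_pos rfl, one_mul, one_zpow, Finset.prod_const_one, mul_one] at h
      rw [mul_comm ((2:ℂ) ^ b i) (C i j)] at h
      exact two_zpow_inj (mul_left_cancel₀ hj h)
    rw [key j hj, key j₀ hj₀]
  · intro h
    classical
    refine ⟨fun i => if hi : ∃ j, C i j ≠ 0 then ∑ l, a l * M l hi.choose else 0,
      fun κ x t hx ht i => ?_⟩
    rw [Finset.mul_sum]
    refine Finset.sum_congr rfl fun j _ => ?_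
    by_cases hj : C i j = 0
    · simp [hj]
    · have hi : ∃ j, C i j ≠ 0 := ⟨j, hj⟩
      simp only [dif_pos hi]
      have hw : (∑ l, a l * M l j) = ∑ l, a l * M l hi.choose :=
        h i j hi.choose hj hi.choose_spec
      rw [zpow_prod_key x t ht a (fun l => M l j), hw]
      ring
end

section
/- Let C ∈ ℂ^{s×m} and suppose a ∈ ℤ^n satisfies: for every circuit vector v of ker(C) and all i, j ∈ supp(v), a·M_i = a·M_j (columns of M ∈ ℤ^{n×m}). Then for every v ∈ ker(C) and every t ∈ ℂ^*, the vector v ∘ t^{aM} (componentwise: (v ∘ t^{aM})_j = v_j t^{a·M_j}) also lies in ker(C). -/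
/-- A circuit vector of `ker(C)`: a nonzero kernel element of minimal support. -/
def kerCircuit {s m : ℕ} (C : Matrix (Fin s) (Fin m) ℂ) (v : Fin m → ℂ) : Prop :=
  C.mulVec v = 0 ∧ v ≠ 0 ∧
    ∀ w : Fin m → ℂ, C.mulVec w = 0 → w ≠ 0 → ¬ ({i | w i ≠ 0} ⊂ {i | v i ≠ 0})

/-- If `a·M_i = a·M_j` for all `i, j` in the support of any circuit vector of `ker(C)`,
then `ker(C)` is stable under the scaling `v_j ↦ v_j t^{a·M_j}` for every `t ∈ ℂ^*`. -/
theorem stmt6 {s m n : ℕ} (C : Matrix (Fin s) (Fin m) ℂ) (M : Matrix (Fin n) (Fin m) ℤ)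
    (a : Fin n → ℤ)
    (h : ∀ v : Fin m → ℂ, kerCircuit C v →
      ∀ i j : Fin m, v i ≠ 0 → v j ≠ 0 → (∑ l, a l * M l i) = ∑ l, a l * M l j) :
    ∀ v : Fin m → ℂ, C.mulVec v = 0 → ∀ t : ℂ, t ≠ 0 →
      C.mulVec (fun j => v j * t ^ (∑ l, a l * M l j)) = 0 := by
  classical
  suffices H : ∀ N : ℕ, ∀ v : Fin m → ℂ,
      (Finset.univ.filter fun j => v j ≠ 0).card ≤ N → C.mulVec v = 0 →
      ∀ t : ℂ, t ≠ 0 →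
      C.mulVec (fun j => v j * t ^ (∑ l, a l * M l j)) = 0 by
    intro v hv t ht
    exact H _ v le_rfl hv t ht
  intro N
  induction N with
  | zero =>
    intro v hcard hv t ht
    have hv0 : ∀ j, v j = 0 := by
      intro j
      by_contra hj
      have hmem : j ∈ (Finset.univ.filter fun j => v j ≠ 0) := by simp [hj]
      have := Finset.card_pos.mpr ⟨j, hmem⟩
      omega
    have hz : (fun j => v j * t ^ (∑ l, a l * M l j)) = (0 : Fin m → ℂ) := by
      funext j; simp [hv0 j]
    rw [hz, Matrix.mulVec_zero]
  | succ N ih =>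
    intro v hcard hv t ht
    by_cases hv0 : v = 0
    · subst hv0
      have hz : (fun j => (0 : Fin m → ℂ) j * t ^ (∑ l, a l * M l j)) = (0 : Fin m → ℂ) := by
        funext j; simp
      rw [hz, Matrix.mulVec_zero]
    set P : ℕ → Prop := fun k => ∃ w : Fin m → ℂ, C.mulVec w = 0 ∧ w ≠ 0 ∧
        (Finset.univ.filter fun j => w j ≠ 0) ⊆ (Finset.univ.filter fun j => v j ≠ 0) ∧
        (Finset.univ.filter fun j => w j ≠ 0).card = k with hPdef
    have hP : ∃ k, P k := ⟨_, v, hv, hv0, subset_rfl, rfl⟩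
    obtain ⟨w, hw0, hwne, hwsub, hwcard⟩ := Nat.find_spec hP
    have hcirc : kerCircuit C w := by
      refine ⟨hw0, hwne, ?_⟩
      intro u hu0 hune hss
      have husub : (Finset.univ.filter fun j => u j ≠ 0) ⊆
          (Finset.univ.filter fun j => w j ≠ 0) := by
        intro j hj
        simp only [Finset.mem_filter] at *
        exact ⟨Finset.mem_univ _, hss.subset hj.2⟩
      obtain ⟨j0, hj0w, hj0u⟩ := Set.exists_of_ssubset hss
      have hlt : (Finset.univ.filter fun j => u j ≠ 0).card <
          (Finset.univ.filter fun j => w j ≠ 0).card := by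
        apply Finset.card_lt_card
        refine ⟨husub, fun hcon => ?_⟩
        have : j0 ∈ (Finset.univ.filter fun j => u j ≠ 0) :=
          hcon (by simpa using hj0w)
        exact hj0u (by simpa using this)
      exact Nat.find_min hP (hwcard ▸ hlt)
        ⟨u, hu0, hune, husub.trans hwsub, rfl⟩
    obtain ⟨i0, hi0⟩ : ∃ i0, w i0 ≠ 0 := by
      by_contra h'
      push_neg at h'
      exact hwne (funext fun j => h' j)
    have hi0v : v i0 ≠ 0 := by
      have := hwsub (by simp [hi0] : i0 ∈ _)
      simpa using this
    set q : ℂ := v i0 / w i0 with hq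
    set v' : Fin m → ℂ := fun j => v j - q * w j with hv'def
    have hv'ker : C.mulVec v' = 0 := by
      have hveq : v' = v - q • w := by
        funext j; simp [hv'def, smul_eq_mul]
      rw [hveq, Matrix.mulVec_sub, Matrix.mulVec_smul, hv, hw0]
      simp
    have hv'i0 : v' i0 = 0 := by
      simp only [hv'def, hq]
      field_simp
      ring
    have hsub' : (Finset.univ.filter fun j => v' j ≠ 0) ⊆
        (Finset.univ.filter fun j => v j ≠ 0).erase i0 := by
      intro j hj
      simp only [Finset.mem_filter, Finset.mem_erase] at *
      refine ⟨fun hji => ?_, Finset.mem_univ _, fun hvj => ?_⟩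
      · exact hj.2 (hji ▸ hv'i0)
      · apply hj.2
        have hwj : w j = 0 := by
          by_contra hwj
          have := hwsub (by simp [hwj] : j ∈ _)
          simp only [Finset.mem_filter] at this
          exact this.2 hvj
        show v j - q * w j = 0
        simp [hvj, hwj]
    have hi0mem : i0 ∈ (Finset.univ.filter fun j => v j ≠ 0) := by simp [hi0v]
    have hcard' : (Finset.univ.filter fun j => v' j ≠ 0).card ≤ N := by
      have h1 := Finset.card_le_card hsub'
      have h2 : ((Finset.univ.filter fun j => v j ≠ 0).erase i0).card =
          (Finset.univ.filter fun j => v j ≠ 0).card - 1 :=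
        Finset.card_erase_of_mem hi0mem
      have h3 := Finset.card_pos.mpr ⟨i0, hi0mem⟩
      omega
    have hIH := ih v' hcard' hv'ker t ht
    have hexp : ∀ j, w j * t ^ (∑ l, a l * M l j) = t ^ (∑ l, a l * M l i0) * w j := by
      intro j
      by_cases hwj : w j = 0
      · simp [hwj]
      · rw [h w hcirc j i0 hwj hi0]
        ring
    have key : (fun j => v j * t ^ (∑ l, a l * M l j)) =
        (fun j => v' j * t ^ (∑ l, a l * M l j)) +
          (q * t ^ (∑ l, a l * M l i0)) • w := by
      funext j
      simp only [Pi.add_apply, Pi.smul_apply, smul_eq_mul, hv'def]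
      have haux : q * w j * t ^ (∑ l, a l * M l j) =
          q * t ^ (∑ l, a l * M l i0) * w j := by
        rw [mul_assoc, hexp j]; ring
      rw [sub_mul, haux]; ring
    rw [key, Matrix.mulVec_add, Matrix.mulVec_smul, hIH, hw0]
    simp
end

section
/- Suppose a ∈ ℤ^n is such that for all v ∈ ker(C) (C ∈ ℂ^{s×m}) and all t ∈ ℂ^*, the vector with j-th entry v_j t^{a·M_j} lies in ker(C), where M_j ∈ ℤ^n are the columns of M. Then for every circuit vector v of ker(C) and every j₀ ∈ supp(v), it holds that a·M_j = a·M_{j₀} for all j ∈ supp(v). -/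
/-- If `ker(C)` is stable under the scalings `v_j ↦ v_j t^{a·M_j}` for all `t ∈ ℂ^*`, then
on the support of any circuit vector of `ker(C)` the values `a·M_j` are all equal. -/
theorem stmt8 {s m n : ℕ} (C : Matrix (Fin s) (Fin m) ℂ) (M : Matrix (Fin n) (Fin m) ℤ)
    (a : Fin n → ℤ)
    (h : ∀ v : Fin m → ℂ, C.mulVec v = 0 → ∀ t : ℂ, t ≠ 0 →
      C.mulVec (fun j => v j * t ^ (∑ l, a l * M l j)) = 0) :
    ∀ v : Fin m → ℂ, kerCircuit C v → ∀ j₀ j : Fin m, v j₀ ≠ 0 → v j ≠ 0 →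
      (∑ l, a l * M l j) = ∑ l, a l * M l j₀ := by
  intro v hv j₀ j hj₀ hj
  obtain ⟨hker, hvne, hmin⟩ := hv
  set e : Fin m → ℤ := fun j' => ∑ l, a l * M l j' with he
  set N : ℕ := ∑ j', (-(e j')).toNat with hN
  have hNe : ∀ j', 0 ≤ e j' + N := by
    intro j'
    have h1 : (-(e j')).toNat ≤ N :=
      Finset.single_le_sum (f := fun j' => (-(e j')).toNat)
        (fun _ _ => Nat.zero_le _) (Finset.mem_univ j')
    omega
  have hpow : ∀ (t : ℂ), t ≠ 0 → ∀ j', t ^ ((e j' + N).toNat) = t ^ (e j') * t ^ (N : ℤ) := by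
    intro t ht j'
    rw [← zpow_natCast t ((e j' + N).toNat), Int.toNat_of_nonneg (hNe j'), zpow_add₀ ht]
  -- key: coefficient extraction
  have key : ∀ i, ∑ j' ∈ Finset.univ.filter (fun j' => e j' = e j₀), C i j' * v j' = 0 := by
    intro i
    set p : Polynomial ℂ :=
      ∑ j', Polynomial.C (C i j' * v j') * Polynomial.X ^ (e j' + N).toNat with hp
    have hpe : ∀ t : ℂ, t ≠ 0 → p.eval t = 0 := by
      intro t ht
      have h1 := congrFun (h v hker t ht) i
      simp only [Matrix.mulVec, dotProduct, Pi.zero_apply] at h1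
      have : p.eval t = (∑ j', C i j' * (v j' * t ^ (e j'))) * t ^ (N : ℤ) := by
        rw [hp, Polynomial.eval_finset_sum, Finset.sum_mul]
        refine Finset.sum_congr rfl fun j' _ => ?_
        simp [hpow t ht j']
        ring
      have h1' : (∑ j', C i j' * (v j' * t ^ (e j'))) = 0 := h1
      rw [this, h1', zero_mul]
    have hp0 : p = 0 := by
      apply Polynomial.eq_zero_of_infinite_isRoot
      apply Set.Infinite.mono (s := {(0:ℂ)}ᶜ)
      · intro t ht
        exact hpe t ht
      · exact Set.Finite.infinite_compl (Set.finite_singleton 0)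
    have hcoeff := congrArg (fun q => Polynomial.coeff q ((e j₀ + N).toNat)) hp0
    simp only [hp, Polynomial.finset_sum_coeff, Polynomial.coeff_C_mul,
      Polynomial.coeff_X_pow, Polynomial.coeff_zero, mul_ite, mul_one, mul_zero] at hcoeff
    rw [Finset.sum_filter]
    calc (∑ j', if e j' = e j₀ then C i j' * v j' else 0)
        = ∑ j', if (e j₀ + N).toNat = (e j' + N).toNat then C i j' * v j' else 0 := by
          refine Finset.sum_congr rfl fun j' _ => ?_
          rcases eq_or_ne (e j') (e j₀) with hc | hc
          · simp [hc]
          · have hne' : (e j' + N).toNat ≠ (e j₀ + N).toNat := by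
              have := hNe j'; have := hNe j₀; omega
            simp [hc, hne', Ne.symm hne']
      _ = 0 := hcoeff
  set w : Fin m → ℂ := fun j' => if e j' = e j₀ then v j' else 0 with hw
  have hwker : C.mulVec w = 0 := by
    funext i
    simp only [Matrix.mulVec, dotProduct, Pi.zero_apply, hw, mul_ite, mul_zero]
    rw [← Finset.sum_filter]
    exact key i
  have hwne : w ≠ 0 := by
    intro h0
    apply hj₀
    have := congrFun h0 j₀
    simpa [hw] using this
  have hsub : {i | w i ≠ 0} ⊆ {i | v i ≠ 0} := by
    intro i hi
    simp only [hw, Set.mem_setOf_eq] at hi ⊢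
    intro h0; apply hi; simp [h0]
  have := hmin w hwker hwne
  have heq : {i | v i ≠ 0} ⊆ {i | w i ≠ 0} := by
    by_contra hc
    exact this ⟨hsub, hc⟩
  have hjw : w j ≠ 0 := heq hj
  simp only [hw] at hjw
  by_contra hne
  simp [hne] at hjw
  exact hne hjw.1
end

section
/- Let F = C(κ ∘ x^M) be a vertical system with C ∈ ℝ^{s×m} and M ∈ ℤ^{n×m}, and suppose F is T_A-invariant over ℝ_{>0} for A ∈ ℤ^{d×n} (i.e., for all κ ∈ ℝ_{>0}^m, x ∈ V_{>0}(F_κ), t ∈ ℝ_{>0}^d one has x ∘ t^A ∈ V_{>0}(F_κ)). Fix κ ∈ ℝ_{>0}^m and b ∈ A(ℝ_{>0}^n). Then the map x ↦ x ∘ T_A^{>0} from {x ∈ ℝ_{>0}^n : F_κ(x) = 0, Ax = b} to the set of T_A^{>0}-cosets contained in V_{>0}(F_κ) is a bijection. -/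
noncomputable def expMap {d n : ℕ} (A : Matrix (Fin d) (Fin n) ℤ) (v : Fin d → ℝ) :
    Fin n → ℝ := fun j => Real.exp (∑ i, (A i j : ℝ) * v i)

lemma zpow_eq_exp (t : ℝ) (ht : 0 < t) (k : ℤ) : t ^ k = Real.exp (k * Real.log t) := by
  rw [← Real.rpow_intCast t k, Real.rpow_def_of_pos ht, mul_comm]

lemma mem_posTorus_iff {d n : ℕ} (A : Matrix (Fin d) (Fin n) ℤ) (u : Fin n → ℝ) :
    u ∈ posTorus A ↔ ∃ v : Fin d → ℝ, u = expMap A v := by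
  constructor
  · rintro ⟨t, ht, rfl⟩
    refine ⟨fun i => Real.log (t i), ?_⟩
    funext j
    simp only [expMap]
    rw [Real.exp_sum]
    exact Finset.prod_congr rfl fun i _ => by rw [zpow_eq_exp _ (ht i)]
  · rintro ⟨v, rfl⟩
    refine ⟨fun i => Real.exp (v i), fun i => Real.exp_pos _, ?_⟩
    funext j
    simp only [expMap]
    rw [Real.exp_sum]
    refine (Finset.prod_congr rfl fun i _ => ?_).symm
    rw [zpow_eq_exp _ (Real.exp_pos _), Real.log_exp]

lemma expMap_mem {d n : ℕ} (A : Matrix (Fin d) (Fin n) ℤ) (v : Fin d → ℝ) :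
    expMap A v ∈ posTorus A := (mem_posTorus_iff A _).2 ⟨v, rfl⟩

lemma expMap_pos {d n : ℕ} (A : Matrix (Fin d) (Fin n) ℤ) (v : Fin d → ℝ) (j : Fin n) :
    0 < expMap A v j := Real.exp_pos _

lemma expMap_add {d n : ℕ} (A : Matrix (Fin d) (Fin n) ℤ) (v w : Fin d → ℝ) :
    expMap A (v + w) = expMap A v * expMap A w := by
  funext j
  simp only [expMap, Pi.mul_apply, ← Real.exp_add, Pi.add_apply, mul_add, Finset.sum_add_distrib]

lemma expMap_zero {d n : ℕ} (A : Matrix (Fin d) (Fin n) ℤ) :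
    expMap A 0 = 1 := by
  funext j; simp [expMap]

lemma expMap_neg_mul {d n : ℕ} (A : Matrix (Fin d) (Fin n) ℤ) (v : Fin d → ℝ) :
    expMap A v * expMap A (-v) = 1 := by
  rw [← expMap_add, add_neg_cancel, expMap_zero]

lemma coset_eq {d n : ℕ} (A : Matrix (Fin d) (Fin n) ℤ) (x u : Fin n → ℝ)
    (hu : u ∈ posTorus A) :
    (fun w => (x * u) * w) '' posTorus A = (fun w => x * w) '' posTorus A := by
  obtain ⟨v, rfl⟩ := (mem_posTorus_iff A u).1 hu
  ext y
  constructor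
  · rintro ⟨w, hw, rfl⟩
    obtain ⟨v', rfl⟩ := (mem_posTorus_iff A w).1 hw
    exact ⟨expMap A (v + v'), expMap_mem A _, by rw [expMap_add]; ring⟩
  · rintro ⟨w, hw, rfl⟩
    obtain ⟨v', rfl⟩ := (mem_posTorus_iff A w).1 hw
    refine ⟨expMap A (-v + v'), expMap_mem A _, ?_⟩
    simp only [expMap_add]
    have := expMap_neg_mul A v
    calc x * expMap A v * (expMap A (-v) * expMap A v')
        = x * (expMap A v * expMap A (-v)) * expMap A v' := by ring
      _ = x * expMap A v' := by rw [this]; ring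

lemma key_nonneg (z : ℝ) : 0 ≤ z * (Real.exp z - 1) := by
  rcases le_or_gt 0 z with h | h
  · exact mul_nonneg h (by simpa using (Real.one_le_exp h))
  · nlinarith [(Real.exp_lt_one_iff.2 h).le]

lemma key_eq_zero {z : ℝ} (h : z * (Real.exp z - 1) = 0) : z = 0 := by
  rcases mul_eq_zero.1 h with h' | h'
  · exact h'
  · have : Real.exp z = Real.exp 0 := by rw [Real.exp_zero]; linarith [sub_eq_zero.1 h']
    exact Real.exp_eq_exp.1 this

lemma uniqueness {d n : ℕ} (A : Matrix (Fin d) (Fin n) ℤ) (y : Fin n → ℝ)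
    (hy : ∀ j, 0 < y j) (v : Fin d → ℝ)
    (hA : ∀ i, ∑ j, (A i j : ℝ) * (y j * expMap A v j) = ∑ j, (A i j : ℝ) * y j) :
    y * expMap A v = y := by
  obtain ⟨z, hz⟩ : ∃ z : Fin n → ℝ, ∀ j, z j = ∑ i, (A i j : ℝ) * v i := ⟨_, fun _ => rfl⟩
  have hE : ∀ j, expMap A v j = Real.exp (z j) := fun j => by rw [hz]; rfl
  have hsum : ∑ j, z j * (y j * (Real.exp (z j) - 1)) = 0 := by
    calc ∑ j, z j * (y j * (Real.exp (z j) - 1))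
        = ∑ j, ∑ i, v i * ((A i j : ℝ) * (y j * expMap A v j) - (A i j : ℝ) * y j) := by
          refine Finset.sum_congr rfl fun j _ => ?_
          simp only [hE]
          rw [hz j, Finset.sum_mul]
          exact Finset.sum_congr rfl fun i _ => by ring
      _ = ∑ i, ∑ j, v i * ((A i j : ℝ) * (y j * expMap A v j) - (A i j : ℝ) * y j) :=
          Finset.sum_comm
      _ = ∑ i : Fin d, v i * ((∑ j, (A i j : ℝ) * (y j * expMap A v j)) - ∑ j, (A i j : ℝ) * y j) := by
          simp only [mul_sub, Finset.mul_sum, Finset.sum_sub_distrib]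
      _ = 0 := Finset.sum_eq_zero fun i _ => by rw [hA i]; ring
  have hzero : ∀ j ∈ Finset.univ, z j * (y j * (Real.exp (z j) - 1)) = 0 :=
    (Finset.sum_eq_zero_iff_of_nonneg fun j _ => by nlinarith [key_nonneg (z j), hy j]).1 hsum
  funext j
  have h0 := hzero j (Finset.mem_univ j)
  have hzj : z j = 0 := by
    apply key_eq_zero
    rcases mul_eq_zero.1 h0 with h | h
    · rw [h, zero_mul]
    · rcases mul_eq_zero.1 h with h | h
      · exact absurd h (hy j).ne'
      · rw [h, mul_zero]
  show y j * expMap A v j = y j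
  rw [hE, hzj, Real.exp_zero, mul_one]

lemma tangent (a b t t0 : ℝ) (ha : 0 < a) (hab : a * Real.exp t0 = b) :
    b * (t - t0 + 1) ≤ a * Real.exp t := by
  have h := Real.add_one_le_exp (t - t0)
  have hpos : 0 < a * Real.exp t0 := mul_pos ha (Real.exp_pos _)
  calc b * (t - t0 + 1) = a * Real.exp t0 * (t - t0 + 1) := by rw [hab]
    _ ≤ a * Real.exp t0 * Real.exp (t - t0) := by
        exact mul_le_mul_of_nonneg_left h hpos.le
    _ = a * Real.exp t := by rw [mul_assoc, ← Real.exp_add]; ring_nf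
lemma lb_m (a b : ℝ) (ha : 0 < a) (hb : 0 < b) (t : ℝ) :
    b - b * Real.log (b / a) ≤ a * Real.exp t - b * t := by
  have h := tangent a b t (Real.log (b / a)) ha
    (by rw [Real.exp_log (div_pos hb ha)]; field_simp)
  nlinarith [h]

lemma lb_c (a b : ℝ) (ha : 0 < a) (hb : 0 < b) (t : ℝ) :
    b * |t| - max 0 (2 * b * (Real.log (2 * b / a) - 1)) ≤ a * Real.exp t - b * t := by
  have h := tangent a (2 * b) t (Real.log (2 * b / a)) ha
    (by rw [Real.exp_log (div_pos (by linarith) ha)]; field_simp)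
  have hmax := le_max_right (0:ℝ) (2 * b * (Real.log (2 * b / a) - 1))
  have hmax0 := le_max_left (0:ℝ) (2 * b * (Real.log (2 * b / a) - 1))
  rcases abs_cases t with ⟨h1, h2⟩ | ⟨h1, h2⟩
  · rw [h1]; nlinarith
  · rw [h1]
    have := (mul_pos ha (Real.exp_pos t))
    nlinarith

noncomputable def Lmap {d n : ℕ} (A : Matrix (Fin d) (Fin n) ℤ) :
    (Fin d → ℝ) →ₗ[ℝ] (Fin n → ℝ) where
  toFun v := fun j => ∑ i, (A i j : ℝ) * v i
  map_add' u v := by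
    funext j
    simp [mul_add, Finset.sum_add_distrib]
  map_smul' c v := by
    funext j
    simp only [Pi.smul_apply, smul_eq_mul, RingHom.id_apply, Finset.mul_sum]
    exact Finset.sum_congr rfl fun i _ => by ring

noncomputable def Gfun (x xp : Fin n → ℝ) : (Fin n → ℝ) → ℝ :=
  fun z => ∑ j, (x j * Real.exp (z j) - xp j * z j)

lemma Gfun_cont (x xp : Fin n → ℝ) : Continuous (Gfun x xp) := by
  unfold Gfun
  refine continuous_finset_sum _ fun j _ => ?_
  exact (continuous_const.mul (Real.continuous_exp.comp (continuous_apply j))).sub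
    (continuous_const.mul (continuous_apply j))

lemma birch_min {d n : ℕ} (A : Matrix (Fin d) (Fin n) ℤ) (x xp : Fin n → ℝ)
    (hx : ∀ j, 0 < x j) (hxp : ∀ j, 0 < xp j) :
    ∃ z ∈ LinearMap.range (Lmap A), ∀ w ∈ LinearMap.range (Lmap A),
      Gfun x xp z ≤ Gfun x xp w := by
  set W := LinearMap.range (Lmap A) with hW
  set G := Gfun x xp with hG
  set mlo : Fin n → ℝ := fun j => xp j - xp j * Real.log (xp j / x j) with hmlo
  set cc : Fin n → ℝ := fun j => max 0 (2 * xp j * (Real.log (2 * xp j / x j) - 1)) with hcc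
  set R : Fin n → ℝ := fun j => max 0 ((G 0 - (∑ j', mlo j') + mlo j + cc j) / xp j) with hR
  set Rtot : ℝ := ∑ j, R j with hRtot
  have hRtot0 : 0 ≤ Rtot := Finset.sum_nonneg fun j _ => le_max_left _ _
  have hbound : ∀ z : Fin n → ℝ, G z ≤ G 0 → ‖z‖ ≤ Rtot := by
    intro z hz
    have hcoord : ∀ j, |z j| ≤ R j := by
      intro j
      have h1 : xp j * |z j| - cc j ≤ x j * Real.exp (z j) - xp j * z j :=
        lb_c (x j) (xp j) (hx j) (hxp j) (z j)
      have h2 : ∀ j', mlo j' ≤ x j' * Real.exp (z j') - xp j' * z j' := fun j' =>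
        lb_m (x j') (xp j') (hx j') (hxp j') (z j')
      have hsplit : G z = (x j * Real.exp (z j) - xp j * z j)
          + ∑ j' ∈ Finset.univ.erase j, (x j' * Real.exp (z j') - xp j' * z j') :=
        (Finset.add_sum_erase _ _ (Finset.mem_univ j)).symm
      have hsplit2 : (∑ j', mlo j') = mlo j + ∑ j' ∈ Finset.univ.erase j, mlo j' :=
        (Finset.add_sum_erase _ _ (Finset.mem_univ j)).symm
      have herase : ∑ j' ∈ Finset.univ.erase j, mlo j'
          ≤ ∑ j' ∈ Finset.univ.erase j, (x j' * Real.exp (z j') - xp j' * z j') :=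
        Finset.sum_le_sum fun j' _ => h2 j'
      have hkey : xp j * |z j| ≤ G 0 - (∑ j', mlo j') + mlo j + cc j := by linarith
      refine le_trans ?_ (le_max_right _ _)
      rw [le_div_iff₀ (hxp j)]
      linarith [hkey]
    have habs : ∑ j, |z j| ≤ Rtot := Finset.sum_le_sum fun j _ => hcoord j
    have : ‖z‖ ≤ ∑ j, |z j| := by
      refine (pi_norm_le_iff_of_nonneg (Finset.sum_nonneg fun j _ => abs_nonneg _)).2
        fun i => ?_
      rw [Real.norm_eq_abs]
      exact Finset.single_le_sum (fun j _ => abs_nonneg (z j)) (Finset.mem_univ i)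
    linarith
  have hWclosed : IsClosed (W : Set (Fin n → ℝ)) := Submodule.closed_of_finiteDimensional _
  have hK : IsCompact (Metric.closedBall (0 : Fin n → ℝ) (Rtot + 1) ∩ W) :=
    (isCompact_closedBall _ _).inter_right hWclosed
  have h0mem : (0 : Fin n → ℝ) ∈ Metric.closedBall (0 : Fin n → ℝ) (Rtot + 1) ∩ W :=
    ⟨Metric.mem_closedBall_self (by linarith), W.zero_mem⟩
  obtain ⟨z, hzK, hzmin⟩ := hK.exists_isMinOn ⟨0, h0mem⟩ (Gfun_cont x xp).continuousOn
  refine ⟨z, hzK.2, fun w hw => ?_⟩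
  by_cases hle : G w ≤ G 0
  · refine hzmin ⟨?_, hw⟩
    rw [Metric.mem_closedBall, dist_zero_right]
    linarith [hbound w hle]
  · have hz0 : G z ≤ G 0 := hzmin h0mem
    linarith [not_le.1 hle]

lemma birch_deriv {d n : ℕ} (A : Matrix (Fin d) (Fin n) ℤ) (x xp : Fin n → ℝ)
    (z : Fin n → ℝ) (hz : z ∈ LinearMap.range (Lmap A))
    (hmin : ∀ w ∈ LinearMap.range (Lmap A), Gfun x xp z ≤ Gfun x xp w) :
    ∀ w ∈ LinearMap.range (Lmap A), ∑ j, (x j * Real.exp (z j) - xp j) * w j = 0 := by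
  intro w hw
  set φ : ℝ → ℝ := fun r => ∑ j, (x j * Real.exp (z j + r * w j) - xp j * (z j + r * w j))
    with hφ
  have hφeq : ∀ r, φ r = Gfun x xp (z + r • w) := by
    intro r
    unfold Gfun
    exact Finset.sum_congr rfl fun j _ => by simp
  have hlocmin : IsLocalMin φ 0 := by
    refine Filter.Eventually.filter_mono (le_refl _) (Filter.Eventually.of_forall fun r => ?_)
    rw [hφeq, hφeq]
    have hmem : z + r • w ∈ LinearMap.range (Lmap A) :=
      Submodule.add_mem _ hz (Submodule.smul_mem _ r hw)
    simpa using hmin _ hmem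
  have hd : HasDerivAt φ (∑ j, (x j * Real.exp (z j) - xp j) * w j) 0 := by
    have hterm : ∀ j ∈ Finset.univ,
        HasDerivAt (fun r => x j * Real.exp (z j + r * w j) - xp j * (z j + r * w j))
          ((x j * Real.exp (z j) - xp j) * w j) 0 := by
      intro j _
      have hinner : HasDerivAt (fun r : ℝ => z j + r * w j) (w j) 0 := by
        simpa using ((hasDerivAt_id (0:ℝ)).mul_const (w j)).const_add (z j)
      have hexp : HasDerivAt (fun r : ℝ => Real.exp (z j + r * w j))
          (Real.exp (z j + 0 * w j) * w j) 0 :=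
        hinner.exp
      have := (hexp.const_mul (x j)).fun_sub (hinner.const_mul (xp j))
      exact this.congr_deriv (by rw [zero_mul, add_zero]; ring)
    exact HasDerivAt.fun_sum hterm
  have h0 := hlocmin.deriv_eq_zero
  rw [hd.deriv] at h0
  exact h0

lemma birch {d n : ℕ} (A : Matrix (Fin d) (Fin n) ℤ) (x xp : Fin n → ℝ)
    (hx : ∀ j, 0 < x j) (hxp : ∀ j, 0 < xp j) :
    ∃ v : Fin d → ℝ, ∀ i,
      ∑ j, (A i j : ℝ) * (x j * Real.exp (∑ i', (A i' j : ℝ) * v i'))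
        = ∑ j, (A i j : ℝ) * xp j := by
  obtain ⟨z, hz, hmin⟩ := birch_min A x xp hx hxp
  obtain ⟨v, hv⟩ := hz
  refine ⟨v, fun i => ?_⟩
  have hzj : ∀ j, (∑ i', (A i' j : ℝ) * v i') = z j := fun j => congrFun hv j
  have hwmem : (fun j => (A i j : ℝ)) ∈ LinearMap.range (Lmap A) := by
    refine ⟨Pi.single i 1, ?_⟩
    funext j
    show (∑ i', (A i' j : ℝ) * (Pi.single i (1:ℝ) : Fin d → ℝ) i') = (A i j : ℝ)
    simp [Pi.single_apply, mul_ite]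
  have h2 := birch_deriv A x xp z ⟨v, hv⟩ hmin _ hwmem
  have h3 : ∑ j, ((A i j : ℝ) * (x j * Real.exp (z j)) - (A i j : ℝ) * xp j) = 0 := by
    rw [← h2]
    exact Finset.sum_congr rfl fun j _ => by ring
  rw [Finset.sum_sub_distrib] at h3
  rw [show (∑ j, (A i j : ℝ) * (x j * Real.exp (∑ i', (A i' j : ℝ) * v i')))
      = ∑ j, (A i j : ℝ) * (x j * Real.exp (z j)) from
    Finset.sum_congr rfl fun j _ => by rw [hzj j]]
  linarith

/-- For a `T_A`-invariant vertical system, fixed positive `κ`, and `b ∈ A(ℝ_{>0}^n)`, the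
map `x ↦ x ∘ T_A^{>0}` is a bijection from the positive solutions of the coset counting
system `(F_κ(x), Ax − b)` onto the set of `T_A^{>0}`-cosets contained in `V_{>0}(F_κ)`. -/
theorem stmt10 {s m n d : ℕ} (C : Matrix (Fin s) (Fin m) ℝ) (M : Matrix (Fin n) (Fin m) ℤ)
    (A : Matrix (Fin d) (Fin n) ℤ)
    (hinv : ∀ κ : Fin m → ℝ, (∀ j, 0 < κ j) → ∀ x : Fin n → ℝ, (∀ l, 0 < x l) →
      (∀ i, ∑ j, C i j * (κ j * ∏ l, x l ^ M l j) = 0) →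
      ∀ u ∈ posTorus A, ∀ i, ∑ j, C i j * (κ j * ∏ l, (x * u) l ^ M l j) = 0)
    (κ : Fin m → ℝ) (hκ : ∀ j, 0 < κ j) (b : Fin d → ℝ)
    (hb : ∃ xp : Fin n → ℝ, (∀ l, 0 < xp l) ∧ ∀ i, b i = ∑ j, (A i j : ℝ) * xp j) :
    Set.BijOn (fun x => (fun u => x * u) '' posTorus A)
      {x : Fin n → ℝ | (∀ l, 0 < x l) ∧ (∀ i, ∑ j, C i j * (κ j * ∏ l, x l ^ M l j) = 0)
        ∧ ∀ i, ∑ j, (A i j : ℝ) * x j = b i}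
      {c : Set (Fin n → ℝ) | ∃ x : Fin n → ℝ, (∀ l, 0 < x l) ∧
        (∀ i, ∑ j, C i j * (κ j * ∏ l, x l ^ M l j) = 0) ∧
        c = (fun u => x * u) '' posTorus A} := by
  obtain ⟨xp, hxp, hbxp⟩ := hb
  refine ⟨?_, ?_, ?_⟩
  · -- MapsTo
    rintro x ⟨hx1, hx2, _⟩
    exact ⟨x, hx1, hx2, rfl⟩
  · -- InjOn
    rintro x hx y hy heq
    simp only [Set.mem_setOf_eq] at hx hy heq
    have hxmem : x ∈ (fun u => x * u) '' posTorus A :=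
      ⟨expMap A 0, expMap_mem A 0, by simp [expMap_zero]⟩
    rw [heq] at hxmem
    obtain ⟨u, hu, hxy⟩ := hxmem
    obtain ⟨v, rfl⟩ := (mem_posTorus_iff A u).1 hu
    have huniq : y * expMap A v = y := by
      refine uniqueness A y hy.1 v fun i => ?_
      have hxeq : ∀ j, y j * expMap A v j = x j := fun j => congrFun hxy j
      simp only [hxeq]
      rw [hx.2.2 i, hy.2.2 i]
    exact hxy.symm.trans huniq
  · -- SurjOn
    rintro c ⟨x0, hx0pos, hx0F, rfl⟩
    obtain ⟨v, hv⟩ := birch A x0 xp hx0pos hxp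
    refine ⟨x0 * expMap A v, ⟨?_, ?_, ?_⟩, ?_⟩
    · exact fun l => mul_pos (hx0pos l) (expMap_pos A v l)
    · exact hinv κ hκ x0 hx0pos hx0F (expMap A v) (expMap_mem A v)
    · intro i
      have h1 : ∑ j, (A i j : ℝ) * (x0 j * expMap A v j) = ∑ j, (A i j : ℝ) * xp j := hv i
      rw [hbxp i]
      exact h1
    · exact coset_eq A x0 (expMap A v) (expMap_mem A v)
end

section
/- Let C ∈ ℝ^{s×m}, M ∈ ℤ^{n×m}, and A ∈ ℤ^{d×n}, and suppose F = C(κ ∘ x^M) is T_A-invariant over ℝ_{>0}. Let L ∈ ℝ^{(n−s)×n}, and let B ∈ ℝ^{n×(n−d)} be a full-rank matrix whose columns span ker_ℝ(A). If there exist distinct x, y ∈ ℝ_{>0}^n with Lx = Ly and Bᵀ(log x) = Bᵀ(log y)... (equivalently y ∈ x ∘ T_A^{>0} when the row space of A equals the orthogonal complement of the column space of B), then there exist κ ∈ ℝ_{>0}^m and b ∈ ℝ^{n−s} such that the augmented system (C(κ ∘ x^M), Lx − b) has at least two zeros in ℝ_{>0}^n. -/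
/-- If `F = C(κ ∘ x^M)` is `T_A`-invariant over `ℝ_{>0}`, `ker(C)` contains a positive
vector, and there are distinct positive `x, y` with `Lx = Ly` lying in the same
`T_A^{>0}`-coset, then the augmented system `(C(κ ∘ x^M), Lx − b)` has at least two
positive zeros for some positive `κ` and some `b`. -/
theorem stmt14 {s m n d e : ℕ} (C : Matrix (Fin s) (Fin m) ℝ)
    (M : Matrix (Fin n) (Fin m) ℤ) (A : Matrix (Fin d) (Fin n) ℤ)
    (L : Matrix (Fin e) (Fin n) ℝ)
    (hker : ∃ w : Fin m → ℝ, C.mulVec w = 0 ∧ ∀ j, 0 < w j)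
    (hinv : ∀ κ : Fin m → ℝ, (∀ j, 0 < κ j) → ∀ x : Fin n → ℝ, (∀ l, 0 < x l) →
      (∀ i, ∑ j, C i j * (κ j * ∏ l, x l ^ M l j) = 0) →
      ∀ u ∈ posTorus A, ∀ i, ∑ j, C i j * (κ j * ∏ l, (x * u) l ^ M l j) = 0)
    (x y : Fin n → ℝ) (hxy : x ≠ y) (hx : ∀ l, 0 < x l) (hy : ∀ l, 0 < y l)
    (hL : L.mulVec x = L.mulVec y) (hcoset : y ∈ (fun u => x * u) '' posTorus A) :
    ∃ κ : Fin m → ℝ, (∀ j, 0 < κ j) ∧ ∃ b : Fin e → ℝ, ∃ x' y' : Fin n → ℝ,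
      x' ≠ y' ∧ (∀ l, 0 < x' l) ∧ (∀ l, 0 < y' l) ∧
      (∀ i, ∑ j, C i j * (κ j * ∏ l, x' l ^ M l j) = 0) ∧
      (∀ i, ∑ j, C i j * (κ j * ∏ l, y' l ^ M l j) = 0) ∧
      L.mulVec x' = b ∧ L.mulVec y' = b := by
  obtain ⟨w, hw0, hwpos⟩ := hker
  set κ : Fin m → ℝ := fun j => w j / ∏ l, x l ^ M l j with hκ
  have hprodpos : ∀ j, 0 < ∏ l, x l ^ M l j := fun j =>
    Finset.prod_pos fun l _ => zpow_pos (hx l) _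
  have hκpos : ∀ j, 0 < κ j := fun j => div_pos (hwpos j) (hprodpos j)
  have hxzero : ∀ i, ∑ j, C i j * (κ j * ∏ l, x l ^ M l j) = 0 := by
    intro i
    have : ∀ j, κ j * ∏ l, x l ^ M l j = w j := fun j =>
      div_mul_cancel₀ _ (hprodpos j).ne'
    simp only [this]
    have := congrFun hw0 i
    simpa [Matrix.mulVec, dotProduct] using this
  obtain ⟨u, hu, hxu⟩ := hcoset
  refine ⟨κ, hκpos, L.mulVec x, x, y, hxy, hx, hy, hxzero, ?_, rfl, hL.symm⟩
  intro i
  have := hinv κ hκpos x hx hxzero u hu i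
  simp only [show x * u = y from hxu] at this; exact this
end
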